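/- For all integers n ≥ 2, p ≥ 1, and α ∈ [0,1], the operator value on monomials admits the representation G_n^α(e_p; z) = ((n-1)!/(n-1+p)!) · [(1-α) Σ_{k=0}^{n-1} p_{n-1,k}(z) F_p(k) + α Σ_{k=0}^{n} p_{n,k}(z) E_p(k)], where E_p(k) = ∏_{j=0}^{p-1}(k+j) and F_p(k) = (1 - k/(n-1)) E_p(k) + (k/(n-1)) E_p(k+1). -/

import Mathlib

open scoped BigOperators Nat

noncomputable def qb (α : ℝ) (n k : ℕ) (z : ℂ) : ℂ :=
  if n = 1 then (if k = 0 then 1 - z else if k = 1 then z else 0)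
  else ((n-2).choose k : ℂ) * (1 - (α:ℂ)) * z^k * (1-z)^(n-k-1)
    + (if 2 ≤ k then ((n-2).choose (k-2) : ℂ) * (1 - (α:ℂ)) * z^(k-1) * (1-z)^(n-k) else 0)
    + (n.choose k : ℂ) * (α:ℂ) * z^k * (1-z)^(n-k)

noncomputable def Gop (α : ℝ) (n : ℕ) (f : ℂ → ℂ) (z : ℂ) : ℂ :=
  qb α n 0 z * f 0 + qb α n n z * f 1 +
    ((n:ℂ) - 1) * ∑ k ∈ Finset.Icc 1 (n-1), qb α n k z *
      ∫ t in (0:ℝ)..1, (((n-2).choose (k-1) : ℂ) * (t:ℂ)^(k-1) * (1-(t:ℂ))^(n-k-1) * f (t:ℂ))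

noncomputable def Ep (p k : ℕ) : ℂ := ∏ j ∈ Finset.range p, ((k:ℂ) + j)

noncomputable def Fp (n p k : ℕ) : ℂ :=
  (1 - (k:ℂ) / ((n:ℂ) - 1)) * Ep p k + ((k:ℂ) / ((n:ℂ) - 1)) * Ep p (k+1)

noncomputable def bern (m j : ℕ) (z : ℂ) : ℂ := (m.choose j : ℂ) * z^j * (1-z)^(m-j)

/-!
For `1 ≤ k ≤ n - 1` the Beta integral gives
`(n - 1) ∫₀¹ p_{n-2,k-1}(t) t^p dt = (n-1)!/(n-1+p)! · E_p(k)`, and the two end terms fit the same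
pattern because `E_p(0) = 0` and `(n-1)!/(n-1+p)! · E_p(n) = 1`. Hence
`G_n^α(e_p; z) = (n-1)!/(n-1+p)! · ∑ₖ q_{n,k}^α(z) E_p(k)`. Splitting `q_{n,k}^α` into its three
Bernstein pieces and using `p_{n-1,k} (1 - k/(n-1)) = (1 - z) p_{n-2,k}` and
`p_{n-1,k+1} (k+1)/(n-1) = z p_{n-2,k}` regroups this sum into the claimed one; the regrouping
works for an arbitrary sequence in place of `E_p`.
-/

open Finset

lemma bern_eq_zero_of_lt {m k : ℕ} (h : m < k) (z : ℂ) : bern m k z = 0 := by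
  simp [bern, Nat.choose_eq_zero_of_lt h]

lemma bern_succ_mul_one_sub_div (m k : ℕ) (z : ℂ) :
    bern (m + 1) k z * (1 - k / ((m : ℂ) + 1)) = (1 - z) * bern m k z := by
  rcases le_or_gt k m with hk | hk
  · have hchoose := congrArg (Nat.cast : ℕ → ℂ) (Nat.choose_mul_succ_eq m k)
    push_cast [Nat.cast_sub (Nat.le_succ_of_le hk)] at hchoose
    simp only [bern, Nat.sub_add_comm hk, pow_succ]
    field_simp
    linear_combination -(z ^ k * (1 - z) * (1 - z) ^ (m - k)) * hchoose
  · rw [bern_eq_zero_of_lt hk, mul_zero]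
    obtain rfl | hk := Nat.eq_or_lt_of_le hk
    · push_cast
      rw [div_self (Nat.cast_add_one_ne_zero m), sub_self, mul_zero]
    · rw [bern_eq_zero_of_lt hk, zero_mul]

lemma bern_succ_succ_mul_div (m k : ℕ) (z : ℂ) :
    bern (m + 1) (k + 1) z * (((k : ℂ) + 1) / ((m : ℂ) + 1)) = z * bern m k z := by
  have hchoose : ((m : ℂ) + 1) * m.choose k = (m + 1).choose (k + 1) * ((k : ℂ) + 1) := by
    exact_mod_cast Nat.add_one_mul_choose_eq m k
  simp only [bern, Nat.add_sub_add_right, pow_succ]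
  field_simp
  linear_combination -(z ^ k * z * (1 - z) ^ (m - k)) * hchoose

lemma integral_pow_mul_one_sub_pow (a b : ℕ) :
    ∫ t in (0 : ℝ)..1, (t : ℂ) ^ a * (1 - (t : ℂ)) ^ b = (a ! * b ! : ℂ) / (a + b + 1)! := by
  have hbeta := Complex.Gamma_mul_Gamma_eq_betaIntegral (s := a + 1) (t := b + 1)
    (by simp; positivity) (by simp; positivity)
  rw [show (a : ℂ) + 1 + (b + 1) = ((a + b + 1 : ℕ) : ℂ) + 1 by push_cast; ring] at hbeta
  simp only [Complex.Gamma_nat_eq_factorial] at hbeta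
  rw [eq_div_iff (Nat.cast_ne_zero.2 (Nat.factorial_ne_zero _)), mul_comm, hbeta,
    Complex.betaIntegral]
  congr 1
  refine intervalIntegral.integral_congr fun t _ => ?_
  simp [← Complex.cpow_natCast]

lemma Ep_eq_ascFactorial (p k : ℕ) : Ep p k = (k.ascFactorial p : ℂ) := by
  simp [Ep, Nat.ascFactorial_eq_prod_range]

lemma Ep_zero_right {p : ℕ} (hp : 0 < p) : Ep p 0 = 0 :=
  prod_eq_zero (mem_range.mpr hp) (by simp)

lemma integral_bern_mul_pow {m j : ℕ} (hj : j ≤ m) (p : ℕ) :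
    ∫ t in (0 : ℝ)..1, bern m j t * (t : ℂ) ^ p = (m ! : ℂ) / (m + p + 1)! * Ep p (j + 1) := by
  have hchoose := congrArg (Nat.cast : ℕ → ℂ) (Nat.choose_mul_factorial_mul_factorial hj)
  have hasc := congrArg (Nat.cast : ℕ → ℂ) (Nat.factorial_mul_ascFactorial j p)
  push_cast at hchoose hasc
  have hintegrand : ∀ t : ℝ, bern m j t * (t : ℂ) ^ p
      = m.choose j * ((t : ℂ) ^ (j + p) * (1 - (t : ℂ)) ^ (m - j)) := fun t => by
    rw [bern]; ring
  simp only [hintegrand]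
  rw [intervalIntegral.integral_const_mul, integral_pow_mul_one_sub_pow,
    show j + p + (m - j) = m + p by omega, Ep_eq_ascFactorial, ← hchoose, ← hasc]
  ring

lemma qb_add_two (α : ℝ) (m k : ℕ) (z : ℂ) :
    qb α (m + 2) k z = (1 - α) * ((1 - z) * bern m k z
      + if 2 ≤ k then z * bern m (k - 2) z else 0) + α * bern (m + 2) k z := by
  have hfirst : (m.choose k : ℂ) * z ^ k * (1 - z) ^ (m + 2 - k - 1) = (1 - z) * bern m k z := by
    rcases le_or_gt k m with hk | hk
    · rw [bern, show m + 2 - k - 1 = m - k + 1 by omega, pow_succ]; ring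
    · rw [bern_eq_zero_of_lt hk, Nat.choose_eq_zero_of_lt hk]; simp
  have hsecond (hk : 2 ≤ k) : (m.choose (k - 2) : ℂ) * z ^ (k - 1) * (1 - z) ^ (m + 2 - k)
      = z * bern m (k - 2) z := by
    rw [bern, show k - 1 = k - 2 + 1 by omega, show m + 2 - k = m - (k - 2) by omega, pow_succ]
    ring
  have hthird : bern (m + 2) k z = (m + 2).choose k * z ^ k * (1 - z) ^ (m + 2 - k) := rfl
  rw [qb, if_neg (by omega), Nat.add_sub_cancel]
  split_ifs with hk
  · linear_combination (1 - (α : ℂ)) * (hfirst + hsecond hk) - α * hthird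
  · linear_combination (1 - (α : ℂ)) * hfirst - α * hthird

lemma sum_bern_succ_mul_one_sub_div (m : ℕ) (z : ℂ) (g : ℕ → ℂ) :
    ∑ k ∈ range (m + 2), bern (m + 1) k z * ((1 - k / ((m : ℂ) + 1)) * g k)
      = ∑ k ∈ range (m + 3), (1 - z) * bern m k z * g k := by
  rw [sum_range_succ _ (m + 2), bern_eq_zero_of_lt (by omega), mul_zero, zero_mul, add_zero]
  refine sum_congr rfl fun k _ => ?_
  rw [← mul_assoc, bern_succ_mul_one_sub_div]

lemma sum_bern_succ_mul_div (m : ℕ) (z : ℂ) (g : ℕ → ℂ) :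
    ∑ k ∈ range (m + 2), bern (m + 1) k z * (k / ((m : ℂ) + 1) * g (k + 1))
      = ∑ k ∈ range (m + 3), (if 2 ≤ k then z * bern m (k - 2) z else 0) * g k := by
  rw [sum_range_succ' _ (m + 1), show m + 3 = m + 1 + 1 + 1 from rfl,
    sum_range_succ' _ (m + 1 + 1), sum_range_succ' _ (m + 1)]
  simp only [Nat.cast_zero, zero_div, zero_mul, mul_zero, add_zero, if_neg (by omega : ¬ 2 ≤ 0),
    if_neg (by omega : ¬ 2 ≤ 0 + 1)]
  refine sum_congr rfl fun k _ => ?_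
  rw [if_pos (by omega), show k + 1 + 1 - 2 = k by omega, ← bern_succ_succ_mul_div]
  push_cast
  ring

lemma sum_qb_mul (α : ℝ) {n : ℕ} (hn : 2 ≤ n) (z : ℂ) (g : ℕ → ℂ) :
    ∑ k ∈ range (n + 1), qb α n k z * g k
      = (1 - α) * ∑ k ∈ range n, bern (n - 1) k z *
          ((1 - (k : ℂ) / ((n : ℂ) - 1)) * g k + ((k : ℂ) / ((n : ℂ) - 1)) * g (k + 1))
        + α * ∑ k ∈ range (n + 1), bern n k z * g k := by
  obtain ⟨m, rfl⟩ : ∃ m, n = m + 2 := ⟨n - 2, by omega⟩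
  rw [show ((m + 2 : ℕ) : ℂ) - 1 = m + 1 by push_cast; ring, show m + 2 - 1 = m + 1 by omega]
  have hsplit : ∑ k ∈ range (m + 2), bern (m + 1) k z *
        ((1 - (k : ℂ) / (m + 1)) * g k + ((k : ℂ) / (m + 1)) * g (k + 1))
      = ∑ k ∈ range (m + 3), ((1 - z) * bern m k z * g k
          + (if 2 ≤ k then z * bern m (k - 2) z else 0) * g k) := by
    rw [sum_add_distrib, ← sum_bern_succ_mul_one_sub_div, ← sum_bern_succ_mul_div,
      ← sum_add_distrib]
    simp only [mul_add]
  rw [hsplit, mul_sum, mul_sum, ← sum_add_distrib]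
  refine sum_congr rfl fun k _ => ?_
  rw [qb_add_two]
  ring

lemma factorial_div_factorial_mul_Ep (m p : ℕ) :
    ((m + 1)! : ℂ) / (m + 1 + p)! * Ep p (m + 2) = 1 := by
  have hasc := congrArg (Nat.cast : ℕ → ℂ) (Nat.factorial_mul_ascFactorial (m + 1) p)
  push_cast at hasc
  rw [Ep_eq_ascFactorial, div_mul_eq_mul_div, hasc,
    div_self (Nat.cast_ne_zero.2 (Nat.factorial_ne_zero _))]

lemma Gop_pow_eq_sum_qb_mul_Ep (α : ℝ) {n p : ℕ} (hn : 2 ≤ n) (hp : 0 < p) (z : ℂ) :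
    Gop α n (fun w => w ^ p) z
      = ((n - 1)! : ℂ) / ((n - 1 + p)! : ℂ) * ∑ k ∈ range (n + 1), qb α n k z * Ep p k := by
  obtain ⟨m, rfl⟩ : ∃ m, n = m + 2 := ⟨n - 2, by omega⟩
  have hnodes (f : ℕ → ℂ) : ∑ k ∈ Icc 1 (m + 1), f k = ∑ k ∈ range (m + 1), f (k + 1) := by
    rw [← Ico_add_one_right_eq_Icc, sum_Ico_eq_sum_range]
    simp [add_comm]
  have hmoment (k : ℕ) (hk : k ∈ range (m + 1)) :
      ((m + 2 : ℕ) - 1 : ℂ) * ∫ t in (0 : ℝ)..1, (((m + 2 - 2).choose (k + 1 - 1) : ℂ)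
        * (t : ℂ) ^ (k + 1 - 1) * (1 - (t : ℂ)) ^ (m + 2 - (k + 1) - 1) * (t : ℂ) ^ p)
      = ((m + 1)! : ℂ) / (m + 1 + p)! * Ep p (k + 1) := by
    have hbern (t : ℝ) : (m.choose k : ℂ) * (t : ℂ) ^ k * (1 - (t : ℂ)) ^ (m - k) = bern m k t :=
      rfl
    simp only [Nat.add_sub_cancel, show m + 2 - (k + 1) - 1 = m - k by omega, hbern]
    rw [integral_bern_mul_pow (by simpa [Nat.lt_succ_iff] using hk),
      show m + 1 + p = m + p + 1 by omega, Nat.factorial_succ m]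
    push_cast
    ring
  rw [Gop, show m + 2 - 1 = m + 1 by omega, hnodes, mul_sum, sum_congr rfl fun k hk => by
    rw [mul_left_comm, hmoment k hk, mul_left_comm], ← mul_sum, sum_range_succ _ (m + 2),
    sum_range_succ' _ (m + 1), Ep_zero_right hp, zero_pow hp.ne', one_pow]
  linear_combination -qb α (m + 2) (m + 2) z * factorial_div_factorial_mul_Ep m p

theorem Gop_monomial_repr_general (n p : ℕ) (hn : 2 ≤ n) (hp : 1 ≤ p)
    (α : ℝ) (z : ℂ) :
    Gop α n (fun w => w^p) z
      = ((n-1)! : ℂ) / ((n-1+p)! : ℂ) *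
          ((1-(α:ℂ)) * ∑ k ∈ Finset.range n, bern (n-1) k z * Fp n p k
            + (α:ℂ) * ∑ k ∈ Finset.range (n+1), bern n k z * Ep p k) := by
  rw [Gop_pow_eq_sum_qb_mul_Ep α hn hp, sum_qb_mul α hn]
  rfl

theorem Gop_monomial_repr (n p : ℕ) (hn : 2 ≤ n) (hp : 1 ≤ p)
    (α : ℝ) (hα : α ∈ Set.Icc (0:ℝ) 1) (z : ℂ) :
    Gop α n (fun w => w^p) z
      = ((n-1)! : ℂ) / ((n-1+p)! : ℂ) *
          ((1-(α:ℂ)) * ∑ k ∈ Finset.range n, bern (n-1) k z * Fp n p k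
            + (α:ℂ) * ∑ k ∈ Finset.range (n+1), bern n k z * Ep p k) :=
  Gop_monomial_repr_general n p hn hp α z
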